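/- Rooted version of the main theorem: Let D be a weighted digraph with vertex weights χ_v and arc weights χ_e, and M(D) its middle digraph. For any fixed arc e_* = (w_*, v_*) of D, κ^{vertex}(M(D), e_*, χ) = χ_{e_*} · κ^{edge}(D, w_*, χ) · (χ_{v_*} + d_{v_*})^{r_{v_*} − 1} · Π_{v ≠ v_*} (χ_v + d_v)^{r_v}, where r_v is the indegree of v in D and d_v = Σ_{e: t(e)=v} χ_e. -/

import Mathlib

open scoped Classical BigOperators

section Digraph

variable {V : Type*} [Fintype V] [DecidableEq V]

/-- `T` is a spanning in-tree (arborescence toward the root) of the digraph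
with arc set containing `T`, rooted at `r`: every vertex other than `r` has
exactly one outgoing arc in `T`, the root has none, and `T` has no directed cycle. -/
def IsSpTree (T : Finset (V × V)) (r : V) : Prop :=
  (∀ v : V, v ≠ r → ∃! a : V × V, a ∈ T ∧ a.1 = v) ∧
  (∀ a ∈ T, a.1 ≠ r) ∧
  (∀ (v : V) (l : List V), ¬ List.Chain (fun a b => (a, b) ∈ T) v (l ++ [v]))

/-- The set of spanning trees of the digraph with arc set `arcs`, rooted at `r`. -/
noncomputable def trees (arcs : Finset (V × V)) (r : V) : Finset (Finset (V × V)) :=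
  arcs.powerset.filter (fun T => IsSpTree T r)

/-- Edge-weighted complexity with root `r`: `κ^{edge}(D, r, χ)`. -/
noncomputable def kappaEdgeRooted (arcs : Finset (V × V)) (χ : V × V → ℝ) (r : V) : ℝ :=
  ∑ T ∈ trees arcs r, ∏ a ∈ T, χ a

/-- Total edge-weighted complexity `κ^{edge}(D, χ)` (over all roots). -/
noncomputable def kappaEdge (arcs : Finset (V × V)) (χ : V × V → ℝ) : ℝ :=
  ∑ r : V, kappaEdgeRooted arcs χ r

/-- Vertex-weighted complexity with root `r`: `κ^{vertex}(D, r, χ)`. -/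
noncomputable def kappaVertexRooted (arcs : Finset (V × V)) (χv : V → ℝ) (r : V) : ℝ :=
  ∑ T ∈ trees arcs r, ∏ a ∈ T, χv a.2

/-- Total vertex-weighted complexity `κ^{vertex}(D, χ)` (over all roots). -/
noncomputable def kappaVertex (arcs : Finset (V × V)) (χv : V → ℝ) : ℝ :=
  ∑ r : V, kappaVertexRooted arcs χv r

/-- Weighted adjacency matrix `W`: `W_{ij} = χ_{ij}` if `(i,j)` is an arc, else `0`. -/
def adjW (arcs : Finset (V × V)) (χ : V × V → ℝ) : Matrix V V ℝ :=
  fun i j => if (i, j) ∈ arcs then χ (i, j) else 0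

/-- Edge-weighted Laplacian `Δ^{edge}`. -/
def lapEdge (arcs : Finset (V × V)) (χ : V × V → ℝ) : Matrix V V ℝ :=
  fun i j => if i = j then ∑ k ∈ Finset.univ.erase i, adjW arcs χ i k
             else - adjW arcs χ i j

/-- Vertex-weighted Laplacian `Δ^{vertex}`. -/
noncomputable def lapVertex (arcs : Finset (V × V)) (χv : V → ℝ) : Matrix V V ℝ :=
  fun u v => if u = v then ∑ a ∈ arcs.filter (fun a => a.1 = u), χv a.2
             else if (u, v) ∈ arcs then - χv v else 0

/-- Matrix obtained by deleting the row and column indexed by `v`. -/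
def minorAt (A : Matrix V V ℝ) (v : V) : Matrix {u : V // u ≠ v} {u : V // u ≠ v} ℝ :=
  A.submatrix (fun u => (u : V)) (fun u => (u : V))

/-- Out-degree of `v`. -/
def outdeg (arcs : Finset (V × V)) (v : V) : ℕ := (arcs.filter (fun a => a.1 = v)).card

/-- In-degree of `v`. -/
def indeg (arcs : Finset (V × V)) (v : V) : ℕ := (arcs.filter (fun a => a.2 = v)).card

/-- Weighted out-degree `d_v = Σ_{t(e) = v} χ_e`. -/
noncomputable def wOut (arcs : Finset (V × V)) (χ : V × V → ℝ) (v : V) : ℝ :=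
  ∑ a ∈ arcs.filter (fun a => a.1 = v), χ a

end Digraph

section MiddleDigraph

variable {V : Type*} [Fintype V] [DecidableEq V]

/-- Arc set of the middle digraph `M(D)` on the vertex set `V(D) ⊕ A(D)`:
each arc `e = (u, v)` of `D` is replaced by the directed path `u → e → v`, and
there is an arc `e → f` whenever the head of `e` equals the tail of `f`. -/
noncomputable def midArcs (arcs : Finset (V × V)) :
    Finset ((V ⊕ {a : V × V // a ∈ arcs}) × (V ⊕ {a : V × V // a ∈ arcs})) :=
  Finset.univ.filter (fun p =>
    match p with
    | (Sum.inl u, Sum.inr e) => (e : V × V).1 = u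
    | (Sum.inr e, Sum.inl v) => (e : V × V).2 = v
    | (Sum.inr e, Sum.inr f) => (e : V × V).2 = (f : V × V).1
    | _ => False)

/-- Vertex weights of `M(D)`: vertices coming from `V(D)` keep their vertex weight,
and the vertex corresponding to an arc `e` gets the arc weight `χ_e`. -/
noncomputable def midWeight (arcs : Finset (V × V)) (χv : V → ℝ) (χ : V × V → ℝ) :
    V ⊕ {a : V × V // a ∈ arcs} → ℝ :=
  Sum.elim χv (fun e => χ (e : V × V))

end MiddleDigraph

/-!
By the directed matrix-tree theorem, `κ^{vertex}(M(D), e⋆)` is the principal minor at `e⋆` of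
the Laplacian of `M(D)` whose arc weights are the weights of the heads. Indexing this minor by
`V(D)` followed by `A(D) ∖ {e⋆}`, it is the block matrix `[[A, -S], [-P D, Λ - P S]]`, where `S`
is the weighted tail incidence matrix and `P` the head incidence matrix of the arcs `≠ e⋆`,
`A = diag(d_v)`, `D = diag(χ_v)` and `Λ = diag(χ_{h(e)} + d_{h(e)})`. Since `P (A + D) = Λ P`,
multiplying by the unitriangular matrices `[[1, 0], [∓P, 1]]` on both sides makes it block
triangular with diagonal blocks `A - S P` and `Λ`. Finally
`A - S P = Δ^{edge}(D) + χ_{e⋆} E_{w⋆v⋆}`, whose determinant is `χ_{e⋆} κ^{edge}(D, w⋆)` because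
`Δ^{edge}(D)` has zero row sums, and `det Λ` regroups by heads into the stated product of powers.

For the matrix-tree theorem, expanding the minor row by row gives a sum over all choices `κ` of
an out-neighbour for each non-root vertex of `∏ χ(i, κ i) · det (1 - N_κ)`, with `N_κ` the
adjacency matrix of `κ`. If all orbits of `κ` end in the root, `N_κ` is nilpotent and the
determinant is `1`; otherwise the indicator of the periodic points is a left eigenvector of `N_κ`
for the eigenvalue `1` and the determinant vanishes. The choices of the first kind are exactly
the spanning trees.
-/

open Function Matrix

theorem Matrix.det_one_sub_eq_one_of_isNilpotent {n R : Type*} [Fintype n] [DecidableEq n]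
    [CommRing R] [IsDomain R] {N : Matrix n n R} (hN : IsNilpotent N) : det (1 - N) = 1 := by
  obtain ⟨c, -, hc⟩ := Polynomial.isUnit_iff.mp (isUnit_charpolyRev_of_isNilpotent hN)
  have hc1 : c = 1 := by simpa [← hc] using eval_charpolyRev (M := N)
  have heval : (charpolyRev N).eval 1 = det (1 - N) := by
    rw [charpolyRev, ← Polynomial.coe_evalRingHom, RingHom.map_det]
    congr 1
    ext i j
    rcases eq_or_ne i j with rfl | hij <;> simp [*]
  rw [← heval, ← hc, hc1, Polynomial.eval_C]

theorem Matrix.det_fromBlocks_neg_of_mul_eq {m n R : Type*} [Fintype m] [DecidableEq m]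
    [Fintype n] [DecidableEq n] [CommRing R] (A D : Matrix m m R) (S : Matrix m n R)
    (P : Matrix n m R) (Λ : Matrix n n R) (h : P * (A + D) = Λ * P) :
    det (fromBlocks A (-S) (-(P * D)) (Λ - P * S)) = det (A - S * P) * det Λ := by
  have htriangular : fromBlocks 1 0 (-P) 1 * fromBlocks A (-S) (-(P * D)) (Λ - P * S) *
      fromBlocks 1 0 P 1 = fromBlocks (A - S * P) (-S) 0 Λ := by
    simp only [fromBlocks_multiply, Matrix.one_mul, Matrix.mul_one, Matrix.zero_mul,
      Matrix.mul_zero, zero_add, add_zero, Matrix.neg_mul, Matrix.mul_neg, neg_neg,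
      add_sub_cancel, ← h, Matrix.mul_add]
    congr 1 <;> abel
  simpa [det_mul, det_fromBlocks_zero₂₁] using congrArg det htriangular

theorem Matrix.fromBlocks_submatrix_sum_map {l m n o l' m' n' o' α : Type*}
    (A : Matrix n l α) (B : Matrix n m α) (C : Matrix o l α) (D : Matrix o m α)
    (f : n' → n) (g : o' → o) (f' : l' → l) (g' : m' → m) :
    (fromBlocks A B C D).submatrix (Sum.map f g) (Sum.map f' g') =
      fromBlocks (A.submatrix f f') (B.submatrix f g') (C.submatrix g f') (D.submatrix g g') := by
  ext (i | i) (j | j) <;> rfl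

theorem Matrix.det_eq_zero_of_sum_row_eq_zero {n R : Type*} [Fintype n] [DecidableEq n]
    [CommRing R] [IsDomain R] [Nonempty n] {M : Matrix n n R} (hM : ∀ u, ∑ v, M u v = 0) :
    det M = 0 :=
  exists_mulVec_eq_zero_iff.mp
    ⟨1, one_ne_zero, funext fun u => by simpa [mulVec, dotProduct] using hM u⟩

theorem det_minorAt_inr {α β : Type*} [Fintype α] [DecidableEq α] [Fintype β] [DecidableEq β]
    (L : Matrix (α ⊕ β) (α ⊕ β) ℝ) (b : β) :
    det (minorAt L (Sum.inr b)) =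
      det (L.submatrix (Sum.map id Subtype.val) (Sum.map id Subtype.val) :
        Matrix (α ⊕ {y // y ≠ b}) (α ⊕ {y // y ≠ b}) ℝ) := by
  let e : α ⊕ {y // y ≠ b} ≃ {x : α ⊕ β // x ≠ Sum.inr b} :=
    (Equiv.sumCongr (Equiv.subtypeUnivEquiv fun _ => Sum.inl_ne_inr).symm
      (Equiv.subtypeEquivRight fun _ => Sum.inr_injective.ne_iff.symm)).trans
      (Equiv.subtypeSum (p := (· ≠ Sum.inr b))).symm
  rw [← det_submatrix_equiv_self e]
  congr 1
  ext (i | i) (j | j) <;> rfl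

@[to_additive]
theorem Finset.prod_subtype_ne_eq_prod_erase {α M : Type*} [DecidableEq α] [CommMonoid M]
    (s : Finset α) {a : α} (ha : a ∈ s) (f : α → M) :
    ∏ x : {x : s // x ≠ ⟨a, ha⟩}, f x.1 = ∏ x ∈ s.erase a, f x := by
  rw [← prod_erase_attach f ⟨a, ha⟩, ← univ_eq_attach]
  exact (prod_subtype (p := (· ≠ ⟨a, ha⟩)) (univ.erase ⟨a, ha⟩) (by simp)
    fun x : s => f x).symm

theorem Function.iterate_card_eq_of_periodicPts_subset {α : Type*} [Fintype α] {F : α → α}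
    {r : α} (hr : F r = r) (h : periodicPts F ⊆ {r}) (v : α) : F^[Fintype.card α] v = r := by
  obtain ⟨a, b, hab, hF⟩ :=
    Fintype.exists_ne_map_eq_of_card_lt (fun i : Fin (Fintype.card α + 1) => F^[i] v) (by simp)
  have hreach : ∀ a b : ℕ, a < b → F^[a] v = F^[b] v → F^[a] v = r := fun a b hlt heq =>
    h <| mk_mem_periodicPts (Nat.sub_pos_of_lt hlt) <| by
      rw [IsPeriodicPt, IsFixedPt, ← iterate_add_apply, Nat.sub_add_cancel hlt.le, heq]
  have ha : F^[a] v = r := by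
    rcases lt_or_gt_of_ne (Fin.val_ne_of_ne hab) with hlt | hlt
    · exact hreach a b hlt hF
    · rw [hF]; exact hreach b a hlt hF.symm
  rw [← Nat.sub_add_cancel (Nat.lt_succ_iff.mp a.2), iterate_add_apply, ha, iterate_fixed hr]

theorem Function.exists_isChain_cycle_iff {α : Type*} {F : α → α} {r : α} (hr : F r = r) :
    (∃ v l, List.IsChain (fun a b => a ≠ r ∧ F a = b) (v :: (l ++ [v]))) ↔
      ∃ v ∈ periodicPts F, v ≠ r := by
  constructor
  · rintro ⟨v, l, hl⟩
    have hv : v ≠ r := by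
      cases l with
      | nil => exact (List.isChain_pair.mp hl).1
      | cons b l => exact (List.isChain_cons_cons.mp hl).1.1
    refine ⟨v, mk_mem_periodicPts (n := l.length + 1) l.length.succ_pos ?_, hv⟩
    have := (hl.imp fun _ _ h => h.2).iterate_eq_of_apply_eq (l.length + 1) (by simp)
    simpa [IsPeriodicPt, IsFixedPt] using this
  · rintro ⟨v, ⟨n, hn, hper⟩, hv⟩
    have horbit : ∀ m, F^[m] v ≠ r := fun m hm => hv <| by
      rw [← (hper.mul_const m).eq, ← Nat.sub_add_cancel (Nat.le_mul_of_pos_left m hn),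
        iterate_add_apply, hm, iterate_fixed hr]
    obtain ⟨k, rfl⟩ : ∃ k, n = k + 1 := Nat.exists_eq_succ_of_ne_zero hn.ne'
    refine ⟨v, List.iterate F (F v) k, ?_⟩
    have hlist : v :: (List.iterate F (F v) k ++ [v]) = List.iterate F v (k + 2) := by
      rw [show k + 2 = (k + 1) + 1 from rfl, List.iterate_add, hper.eq]
      rfl
    rw [hlist, List.isChain_iff_getElem]
    intro i hi
    simp only [List.getElem_iterate]
    exact ⟨horbit i, (iterate_succ_apply' F i v).symm⟩

section Laplacian

variable {V : Type*} [Fintype V] [DecidableEq V]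

theorem sum_adjW_eq_wOut (arcs : Finset (V × V)) (χ : V × V → ℝ) (u : V) :
    ∑ v, adjW arcs χ u v = wOut arcs χ u := by
  conv_rhs => rw [wOut, Finset.sum_filter, ← Finset.univ_inter arcs, ← Finset.sum_ite_mem,
    Fintype.sum_prod_type]
  simp only [← ite_and, and_comm (a := _ ∈ arcs)]
  simp [ite_and, adjW]

theorem lapEdge_eq_diagonal_sub (arcs : Finset (V × V)) (χ : V × V → ℝ) :
    lapEdge arcs χ = diagonal (wOut arcs χ) - adjW arcs χ := by
  ext i j
  rcases eq_or_ne i j with rfl | hij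
  · simp [lapEdge, diagonal, Finset.sum_erase_eq_sub, sum_adjW_eq_wOut]
  · simp [lapEdge, hij]

theorem sum_lapEdge_row_eq_zero (arcs : Finset (V × V)) (χ : V × V → ℝ) (u : V) :
    ∑ v, lapEdge arcs χ u v = 0 := by
  simp [lapEdge_eq_diagonal_sub, Finset.sum_sub_distrib, sum_adjW_eq_wOut, diagonal_apply]

theorem det_updateRow_single_self_eq_det_minorAt (L : Matrix V V ℝ) (w : V) :
    det (updateRow L w (Pi.single w 1)) = det (minorAt L w) := by
  rw [twoBlockTriangular_det _ (· ≠ w)]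
  · have h1 : toSquareBlockProp (updateRow L w (Pi.single w 1)) (¬ · ≠ w) = 1 := by
      ext ⟨i, hi⟩ ⟨j, hj⟩
      obtain rfl := not_not.mp hi
      obtain rfl := not_not.mp hj
      simp [toSquareBlockProp_def]
    have h2 : toSquareBlockProp (updateRow L w (Pi.single w 1)) (· ≠ w) = minorAt L w := by
      ext ⟨i, hi⟩ ⟨j, hj⟩
      simp [toSquareBlockProp_def, minorAt, hi]
    rw [h1, h2, det_one, mul_one]
  · intro i hi j hj
    simp [not_not.mp hi, hj]

/-- Expanding along row `w`; all cofactors of a row of a matrix with zero row sums agree. -/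
theorem det_add_single_eq_mul_det_minorAt (L : Matrix V V ℝ) (hL : ∀ u, ∑ v, L u v = 0)
    (w v : V) (c : ℝ) : det (L + single w v c) = c * det (minorAt L w) := by
  have : Nonempty V := ⟨w⟩
  have hrow : L + single w v c = updateRow L w (L w + c • Pi.single v 1) := by
    ext i j
    by_cases hi : i = w
    · subst hi; simp [single_apply, Pi.single_apply, eq_comm]
    · simp [hi, Ne.symm hi]
  have hv : det (updateRow L w (Pi.single v 1)) = det (updateRow L w (Pi.single w 1)) := by
    rw [← add_sub_cancel (Pi.single w (1 : ℝ)) (Pi.single v 1), det_updateRow_add,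
      add_eq_left]
    refine det_eq_zero_of_sum_row_eq_zero fun u => ?_
    by_cases hu : u = w
    · subst hu; simp [Finset.sum_sub_distrib]
    · simpa [hu] using hL u
  rw [hrow, det_updateRow_add, updateRow_eq_self, det_eq_zero_of_sum_row_eq_zero hL, zero_add,
    det_updateRow_smul, hv, det_updateRow_single_self_eq_det_minorAt]

end Laplacian

section SuccessorMap

variable {V : Type*} [DecidableEq V] {r : V}

def succMap (r : V) (κ : {u : V // u ≠ r} → V) : V → V :=
  fun v => if h : v = r then r else κ ⟨v, h⟩

@[simp]
theorem succMap_root (κ : {u : V // u ≠ r} → V) : succMap r κ r = r := dif_pos rfl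

@[simp]
theorem succMap_coe (κ : {u : V // u ≠ r} → V) (i : {u : V // u ≠ r}) :
    succMap r κ i = κ i := dif_neg i.2

variable [Fintype V]

def succGraph (κ : {u : V // u ≠ r} → V) : Finset (V × V) :=
  Finset.univ.image fun i : {u : V // u ≠ r} => ((i : V), κ i)

theorem mem_succGraph {κ : {u : V // u ≠ r} → V} {a b : V} :
    (a, b) ∈ succGraph κ ↔ a ≠ r ∧ succMap r κ a = b := by
  constructor
  · simp only [succGraph, Finset.mem_image, Finset.mem_univ, true_and, Prod.mk.injEq]
    rintro ⟨i, rfl, rfl⟩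
    exact ⟨i.2, succMap_coe κ i⟩
  · rintro ⟨ha, rfl⟩
    exact Finset.mem_image.mpr ⟨⟨a, ha⟩, Finset.mem_univ _, by simp [← succMap_coe κ]⟩

theorem succGraph_injective : Injective (succGraph (V := V) (r := r)) := by
  intro κ κ' h
  funext i
  have hi : ((i : V), κ i) ∈ succGraph κ' := h ▸ mem_succGraph.mpr ⟨i.2, succMap_coe κ i⟩
  simpa using (mem_succGraph.mp hi).2.symm

theorem isSpTree_succGraph_iff (κ : {u : V // u ≠ r} → V) :
    IsSpTree (succGraph κ) r ↔ periodicPts (succMap r κ) ⊆ {r} := by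
  have hcycle := exists_isChain_cycle_iff (succMap_root κ)
  simp only [Set.subset_singleton_iff]
  refine ⟨fun h => ?_, fun h => ⟨fun v hv => ?_, fun a ha => ?_, fun v l hl => ?_⟩⟩
  · by_contra hne
    push Not at hne
    obtain ⟨v, l, hl⟩ := hcycle.mpr hne
    exact h.2.2 v l (hl.imp fun a b hab => mem_succGraph.mpr hab)
  · refine ⟨(v, succMap r κ v), ⟨mem_succGraph.mpr ⟨hv, rfl⟩, rfl⟩, ?_⟩
    rintro ⟨a, b⟩ ⟨hab, rfl⟩
    rw [(mem_succGraph.mp hab).2]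
  · exact (mem_succGraph.mp ha).1
  · obtain ⟨w, hw, hwr⟩ :=
      hcycle.mp ⟨v, l, List.IsChain.imp (fun a b hab => mem_succGraph.mp hab) hl⟩
    exact hwr (h w hw)

theorem exists_succGraph_eq_of_isSpTree {T : Finset (V × V)} (hT : IsSpTree T r) :
    ∃ κ : {u : V // u ≠ r} → V, succGraph κ = T := by
  choose a haT hafst using fun i : {u : V // u ≠ r} => (hT.1 i i.2).exists
  refine ⟨fun i => (a i).2, Finset.ext fun ⟨x, y⟩ => ⟨fun h => ?_, fun h => ?_⟩⟩
  · obtain ⟨i, -, hi⟩ := Finset.mem_image.mp h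
    rw [← hi, ← hafst i]
    exact haT i
  · have hx : x ≠ r := hT.2.1 _ h
    have := (hT.1 x hx).unique ⟨h, rfl⟩ ⟨haT ⟨x, hx⟩, hafst _⟩
    exact Finset.mem_image.mpr ⟨⟨x, hx⟩, Finset.mem_univ _, by rw [this, ← hafst ⟨x, hx⟩]⟩

theorem trees_eq_image_succGraph (arcs : Finset (V × V)) (r : V) :
    trees arcs r = (Finset.univ.filter fun κ : {u : V // u ≠ r} → V =>
      (∀ i : {u : V // u ≠ r}, ((i : V), κ i) ∈ arcs) ∧
        periodicPts (succMap r κ) ⊆ {r}).image succGraph := by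
  ext T
  rw [trees, Finset.mem_filter, Finset.mem_powerset, Finset.mem_image]
  simp only [Finset.mem_filter, Finset.mem_univ, true_and]
  constructor
  · rintro ⟨hsub, hT⟩
    obtain ⟨κ, rfl⟩ := exists_succGraph_eq_of_isSpTree hT
    exact ⟨κ, ⟨fun i => hsub (mem_succGraph.mpr ⟨i.2, succMap_coe κ i⟩),
      (isSpTree_succGraph_iff κ).mp hT⟩, rfl⟩
  · rintro ⟨κ, ⟨harcs, hacyc⟩, rfl⟩
    refine ⟨fun a ha => ?_, (isSpTree_succGraph_iff κ).mpr hacyc⟩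
    obtain ⟨i, -, rfl⟩ := Finset.mem_image.mp ha
    exact harcs i

end SuccessorMap

section SuccessorMatrix

variable {V R : Type*} [Fintype V] [DecidableEq V] [CommRing R] {r : V}

def succMatrix (R : Type*) [CommRing R] (κ : {u : V // u ≠ r} → V) :
    Matrix {u : V // u ≠ r} {u : V // u ≠ r} R :=
  of fun i j => if κ i = j then 1 else 0

theorem succMatrix_pow_apply (κ : {u : V // u ≠ r} → V) (m : ℕ) (i j : {u : V // u ≠ r}) :
    (succMatrix R κ ^ m) i j = if (succMap r κ)^[m] i = j then 1 else 0 := by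
  induction m generalizing j with
  | zero => simp only [pow_zero, one_apply, iterate_zero_apply, Subtype.ext_iff]; congr
  | succ m ih =>
    rw [pow_succ, mul_apply, iterate_succ_apply']
    simp only [ih, boole_mul]
    simp only [succMatrix, of_apply]
    by_cases hm : (succMap r κ)^[m] i = r
    · rw [hm, succMap_root, if_neg (Ne.symm j.2)]
      exact Finset.sum_eq_zero fun k _ => if_neg fun hk => k.2 hk.symm
    · rw [Finset.sum_eq_single ⟨_, hm⟩]
      · simp [succMap, hm]
      · intro k _ hk
        rw [if_neg fun h => hk (Subtype.ext h.symm)]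
      · simp

theorem isNilpotent_succMatrix {κ : {u : V // u ≠ r} → V}
    (h : periodicPts (succMap r κ) ⊆ {r}) : IsNilpotent (succMatrix R κ) := by
  refine ⟨Fintype.card V, ?_⟩
  ext i j
  rw [succMatrix_pow_apply, iterate_card_eq_of_periodicPts_subset (succMap_root κ) h,
    if_neg (Ne.symm j.2), Matrix.zero_apply]

/-- The indicator vector of the periodic points of `succMap r κ` is a left eigenvector of
`succMatrix R κ` for the eigenvalue `1`, since `succMap r κ` permutes its periodic points. -/
theorem det_one_sub_succMatrix_eq_zero [IsDomain R] {κ : {u : V // u ≠ r} → V}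
    (h : ¬ periodicPts (succMap r κ) ⊆ {r}) : det (1 - succMatrix R κ) = 0 := by
  set F := succMap r κ
  have hFr : F r = r := succMap_root κ
  have hFκ : ∀ i : {u : V // u ≠ r}, F i = κ i := succMap_coe κ
  obtain ⟨v, hvP, hvr⟩ := Set.not_subset.mp h
  let x : {u : V // u ≠ r} → R := fun i => if (i : V) ∈ periodicPts F then 1 else 0
  refine exists_vecMul_eq_zero_iff.mp ⟨x, fun h0 => ?_, ?_⟩
  · simpa [x, hvP] using congrFun h0 ⟨v, hvr⟩
  rw [vecMul_sub, vecMul_one, sub_eq_zero]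
  funext j
  simp only [vecMul, dotProduct, succMatrix, of_apply, x, boole_mul, ← ite_and, ← hFκ]
  by_cases hj : (j : V) ∈ periodicPts F
  · obtain ⟨u, huP, hu⟩ := (bijOn_periodicPts F).surjOn hj
    have hur : u ≠ r := fun hur => j.2 (by rw [← hu, hur, hFr])
    rw [if_pos hj, Finset.sum_eq_single ⟨u, hur⟩, if_pos (And.intro huP hu)]
    · rintro i - hi
      exact if_neg fun ⟨hiP, hij⟩ =>
        hi (Subtype.ext ((bijOn_periodicPts F).injOn hiP huP (hij.trans hu.symm)))
    · simp
  · rw [if_neg hj, eq_comm]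
    refine Finset.sum_eq_zero fun i _ => ?_
    refine if_neg ?_
    rintro ⟨hiP, hij⟩
    exact hj (hij ▸ (bijOn_periodicPts F).mapsTo hiP)

theorem det_one_sub_succMatrix [IsDomain R] (κ : {u : V // u ≠ r} → V) :
    det (1 - succMatrix R κ) = if periodicPts (succMap r κ) ⊆ {r} then 1 else 0 := by
  split_ifs with h
  · exact det_one_sub_eq_one_of_isNilpotent (isNilpotent_succMatrix h)
  · exact det_one_sub_succMatrix_eq_zero h

end SuccessorMatrix

section MatrixTree

variable {V : Type*} [Fintype V] [DecidableEq V]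

theorem det_minorAt_lapEdge_eq_sum (arcs : Finset (V × V)) (χ : V × V → ℝ) (r : V) :
    det (minorAt (lapEdge arcs χ) r) =
      ∑ κ : {u : V // u ≠ r} → V,
        (∏ i : {u : V // u ≠ r}, adjW arcs χ i (κ i)) * det (1 - succMatrix ℝ κ) := by
  let row (i : {u : V // u ≠ r}) (k : V) := adjW arcs χ i k • (1 - succMatrix ℝ fun _ => k) i
  have hrows : minorAt (lapEdge arcs χ) r = of fun i => ∑ k, row i k := by
    ext i j
    simp [row, minorAt, lapEdge_eq_diagonal_sub, succMatrix, one_apply, mul_sub,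
      Finset.sum_sub_distrib, sum_adjW_eq_wOut, diagonal, Subtype.ext_iff]
  rw [hrows]
  refine (detRowAlternating.toMultilinearMap.map_sum row).trans
    (Finset.sum_congr rfl fun κ _ => ?_)
  rw [detRowAlternating.toMultilinearMap.map_smul_univ, smul_eq_mul]
  rfl

theorem prod_succGraph {M : Type*} [CommMonoid M] {r : V} (κ : {u : V // u ≠ r} → V)
    (f : V × V → M) : ∏ a ∈ succGraph κ, f a = ∏ i : {u : V // u ≠ r}, f (i, κ i) :=
  Finset.prod_image fun _ _ _ _ h => Subtype.ext (Prod.ext_iff.mp h).1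

theorem kappaEdgeRooted_eq_det_minorAt (arcs : Finset (V × V)) (χ : V × V → ℝ) (r : V) :
    kappaEdgeRooted arcs χ r = det (minorAt (lapEdge arcs χ) r) := by
  rw [det_minorAt_lapEdge_eq_sum, kappaEdgeRooted, trees_eq_image_succGraph,
    Finset.sum_image succGraph_injective.injOn, Finset.sum_filter]
  refine Finset.sum_congr rfl fun κ _ => ?_
  rw [det_one_sub_succMatrix, prod_succGraph]
  by_cases harcs : ∀ i : {u : V // u ≠ r}, ((i : V), κ i) ∈ arcs
  · have : ∏ i : {u : V // u ≠ r}, adjW arcs χ i (κ i) = ∏ i : {u : V // u ≠ r}, χ (i, κ i) :=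
      Finset.prod_congr rfl fun i _ => if_pos (harcs i)
    simp [this, harcs]
  · obtain ⟨i, hi⟩ := not_forall.mp harcs
    rw [if_neg (by tauto), Finset.prod_eq_zero (Finset.mem_univ i) (if_neg hi), zero_mul]

end MatrixTree

section Incidence

variable {V ι R : Type*} [DecidableEq V] [CommRing R]

def tailMatrix (tail : ι → V) (w : ι → R) : Matrix V ι R :=
  of fun u i => if tail i = u then w i else 0

def headMatrix (R : Type*) [CommRing R] (head : ι → V) : Matrix ι V R :=
  of fun i v => if head i = v then 1 else 0

@[simp]
theorem tailMatrix_submatrix {κ : Type*} (tail : ι → V) (w : ι → R) (f : κ → ι) :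
    (tailMatrix tail w).submatrix id f = tailMatrix (tail ∘ f) (w ∘ f) := rfl

@[simp]
theorem headMatrix_submatrix {κ : Type*} (head : ι → V) (f : κ → ι) :
    (headMatrix R head).submatrix f id = headMatrix R (head ∘ f) := rfl

theorem headMatrix_mul_apply [Fintype V] {α : Type*} (head : ι → V) (A : Matrix V α R) (i : ι)
    (a : α) : (headMatrix R head * A) i a = A (head i) a := by
  simp [headMatrix, mul_apply]

theorem tailMatrix_mul_headMatrix_apply {ι : Type*} [Fintype ι] (tail head : ι → V) (w : ι → R)
    (u v : V) : (tailMatrix tail w * headMatrix R head) u v =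
      ∑ i, if (tail i, head i) = (u, v) then w i else 0 := by
  simp [tailMatrix, headMatrix, mul_apply, ← ite_and, and_comm]

end Incidence

section MiddleDigraphLaplacian

variable {V : Type*} [DecidableEq V] (arcs : Finset (V × V))

abbrev arcTail : {a : V × V // a ∈ arcs} → V := fun e => e.1.1
abbrev arcHead : {a : V × V // a ∈ arcs} → V := fun e => e.1.2

theorem sum_tailMatrix_row (χ : V × V → ℝ) (u : V) :
    ∑ e, tailMatrix (arcTail arcs) (fun e => χ e) u e = wOut arcs χ u := by
  simp only [tailMatrix, of_apply, wOut, Finset.sum_filter]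
  exact Finset.sum_coe_sort arcs fun a => if a.1 = u then χ a else 0

variable [Fintype V]

theorem adjW_midArcs (χv : V → ℝ) (χ : V × V → ℝ) :
    adjW (midArcs arcs) (fun a => midWeight arcs χv χ a.2) =
      fromBlocks 0 (tailMatrix (arcTail arcs) fun e => χ e)
        (headMatrix ℝ (arcHead arcs) * diagonal χv)
        (headMatrix ℝ (arcHead arcs) * tailMatrix (arcTail arcs) fun e => χ e) := by
  ext (u | e) (v | f)
  · simp [adjW, midArcs]
  · simp [adjW, midArcs, midWeight, tailMatrix]
  · by_cases h : (e : V × V).2 = v <;>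
      simp [adjW, midArcs, midWeight, headMatrix_mul_apply, diagonal, h]
  · simp [adjW, midArcs, midWeight, headMatrix_mul_apply, tailMatrix, eq_comm]

theorem lapEdge_midArcs (χv : V → ℝ) (χ : V × V → ℝ) :
    lapEdge (midArcs arcs) (fun a => midWeight arcs χv χ a.2) =
      fromBlocks (diagonal (wOut arcs χ)) (-tailMatrix (arcTail arcs) fun e => χ e)
        (-(headMatrix ℝ (arcHead arcs) * diagonal χv))
        (diagonal (fun e => χv (arcHead arcs e) + wOut arcs χ (arcHead arcs e)) -
          headMatrix ℝ (arcHead arcs) * tailMatrix (arcTail arcs) fun e => χ e) := by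
  have hw : wOut (midArcs arcs) (fun a => midWeight arcs χv χ a.2) =
      Sum.elim (wOut arcs χ) fun e => χv (arcHead arcs e) + wOut arcs χ (arcHead arcs e) := by
    funext x
    rw [← sum_adjW_eq_wOut, adjW_midArcs, Fintype.sum_sum_type]
    cases x <;>
      simp [-Finset.univ_eq_attach, headMatrix_mul_apply, sum_tailMatrix_row, diagonal]
  rw [lapEdge_eq_diagonal_sub, hw, adjW_midArcs]
  ext (i | i) (j | j) <;> simp [diagonal]

theorem diagonal_wOut_sub_tailMatrix_mul_headMatrix (χ : V × V → ℝ) {e : V × V}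
    (he : e ∈ arcs) :
    diagonal (wOut arcs χ) -
        tailMatrix (fun f : {f : {a // a ∈ arcs} // f ≠ ⟨e, he⟩} => f.1.1.1) (fun f => χ f.1.1) *
          headMatrix ℝ (fun f : {f : {a // a ∈ arcs} // f ≠ ⟨e, he⟩} => f.1.1.2) =
      lapEdge arcs χ + single e.1 e.2 (χ e) := by
  ext u v
  rw [Matrix.sub_apply, tailMatrix_mul_headMatrix_apply,
    Finset.sum_subtype_ne_eq_sum_erase arcs he fun a => if (a.1, a.2) = (u, v) then χ a else 0]
  by_cases h : (u, v) = e
  · subst h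
    simp [lapEdge_eq_diagonal_sub, adjW, he]
  · simp [lapEdge_eq_diagonal_sub, adjW, single_apply, Finset.sum_ite_eq', h]
    rintro rfl rfl
    exact absurd rfl h

theorem det_minorAt_lapEdge_midArcs (χv : V → ℝ) (χ : V × V → ℝ) {e : V × V}
    (he : e ∈ arcs) :
    det (minorAt (lapEdge (midArcs arcs) (fun a => midWeight arcs χv χ a.2))
        (Sum.inr ⟨e, he⟩)) =
      det (lapEdge arcs χ + single e.1 e.2 (χ e)) *
        ∏ a ∈ arcs.erase e, (χv a.2 + wOut arcs χ a.2) := by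
  rw [det_minorAt_inr, lapEdge_midArcs, fromBlocks_submatrix_sum_map]
  simp only [submatrix_id_id, submatrix_neg, submatrix_sub, Pi.neg_apply, Pi.sub_apply,
    submatrix_mul _ _ _ id _ bijective_id, submatrix_diagonal _ _ Subtype.val_injective,
    tailMatrix_submatrix, headMatrix_submatrix]
  rw [det_fromBlocks_neg_of_mul_eq, det_diagonal]
  · congr 1
    · exact congrArg det (diagonal_wOut_sub_tailMatrix_mul_headMatrix arcs χ he)
    · exact Finset.prod_subtype_ne_eq_prod_erase arcs he fun a => χv a.2 + wOut arcs χ a.2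
  · ext f v
    rw [headMatrix_mul_apply, diagonal_mul]
    by_cases h : (f : V × V).2 = v <;> simp [headMatrix, h, add_comm]

end MiddleDigraphLaplacian

theorem Finset.prod_erase_snd_eq_prod_pow_indeg {V M : Type*} [Fintype V] [DecidableEq V]
    [CommMonoid M] (arcs : Finset (V × V)) {e : V × V} (he : e ∈ arcs) (g : V → M) :
    ∏ a ∈ arcs.erase e, g a.2 =
      g e.2 ^ (indeg arcs e.2 - 1) * ∏ v ∈ univ.erase e.2, g v ^ indeg arcs v := by
  rw [← prod_fiberwise' (arcs.erase e) Prod.snd g, ← mul_prod_erase univ _ (mem_univ e.2)]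
  simp only [prod_const, filter_erase]
  rw [card_erase_of_mem (mem_filter.mpr ⟨he, rfl⟩ : e ∈ {a ∈ arcs | a.2 = e.2})]
  congr 1
  refine prod_congr rfl fun v hv => ?_
  rw [erase_eq_of_notMem fun h => (mem_erase.mp hv).1 (mem_filter.mp h).2.symm]
  rfl

theorem kappaVertexRooted_eq_kappaEdgeRooted {V : Type*} [Fintype V] [DecidableEq V]
    (arcs : Finset (V × V)) (χv : V → ℝ) (r : V) :
    kappaVertexRooted arcs χv r = kappaEdgeRooted arcs (fun a => χv a.2) r := rfl

theorem kappaVertex_middle_rooted_general {V : Type*} [Fintype V] [DecidableEq V]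
    (arcs : Finset (V × V)) (χv : V → ℝ) (χ : V × V → ℝ)
    (estar : V × V) (hestar : estar ∈ arcs) :
    kappaVertexRooted (midArcs arcs) (midWeight arcs χv χ) (Sum.inr ⟨estar, hestar⟩) =
      χ estar * kappaEdgeRooted arcs χ estar.1 *
        (χv estar.2 + wOut arcs χ estar.2) ^ (indeg arcs estar.2 - 1) *
        ∏ v ∈ Finset.univ.erase estar.2, (χv v + wOut arcs χ v) ^ (indeg arcs v) := by
  rw [kappaVertexRooted_eq_kappaEdgeRooted, kappaEdgeRooted_eq_det_minorAt,
    det_minorAt_lapEdge_midArcs arcs χv χ hestar,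
    det_add_single_eq_mul_det_minorAt _ (sum_lapEdge_row_eq_zero arcs χ),
    ← kappaEdgeRooted_eq_det_minorAt,
    Finset.prod_erase_snd_eq_prod_pow_indeg arcs hestar fun v => χv v + wOut arcs χ v]
  ring

/-- **Rooted version of the main theorem.** For a fixed arc `e⋆ = (w⋆, v⋆)` of `D`,
`κ^{vertex}(M(D), e⋆, χ) = χ_{e⋆} · κ^{edge}(D, w⋆, χ) · (χ_{v⋆} + d_{v⋆})^{r_{v⋆}−1}
· Π_{v ≠ v⋆} (χ_v + d_v)^{r_v}`. -/
theorem kappaVertex_middle_rooted {V : Type*} [Fintype V] [DecidableEq V]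
    (arcs : Finset (V × V)) (χv : V → ℝ) (χ : V × V → ℝ)
    (hsimple : ∀ v : V, (v, v) ∉ arcs)
    (hposv : ∀ v : V, 0 < χv v) (hpose : ∀ a ∈ arcs, 0 < χ a)
    (estar : V × V) (hestar : estar ∈ arcs) :
    kappaVertexRooted (midArcs arcs) (midWeight arcs χv χ) (Sum.inr ⟨estar, hestar⟩) =
      χ estar * kappaEdgeRooted arcs χ estar.1 *
        (χv estar.2 + wOut arcs χ estar.2) ^ (indeg arcs estar.2 - 1) *
        ∏ v ∈ Finset.univ.erase estar.2, (χv v + wOut arcs χ v) ^ (indeg arcs v) :=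
  kappaVertex_middle_rooted_general arcs χv χ estar hestar
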